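/- Let E : V → V be a bounded self-adjoint operator on a real Hilbert space V, and suppose a quadratic identity ⟨E x, 𝒜x⟩ = -2a q(x)² holds on Dom(𝒜) for a continuous linear functional q and a > 0. If operators E_k and E_{k,l} are self-adjoint with ⟨E_k x, 𝒜x⟩ = -2a q_k(x)² and ⟨E_{k,l} x, 𝒜x⟩ = -4a q_k(x)q_l(x), and E = ∑_k c_k² E_k + ∑_{k<l} c_k c_l E_{k,l} converges in operator norm, then ⟨E x, 𝒜x⟩ = -2a (∑_k c_k q_k(x))² for all x ∈ Dom(𝒜), where the sums converge appropriately. -/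

import Mathlib

open scoped RealInnerProductSpace

namespace Finset

theorem sq_sum_eq_sum_sq_add_two_mul_sum_lt {ι R : Type*} [LinearOrder ι] [CommSemiring R]
    (s : Finset ι) (f : ι → R) :
    (∑ i ∈ s, f i) ^ 2 = ∑ i ∈ s, f i ^ 2 + 2 * ∑ i ∈ s, ∑ j ∈ s with i < j, f i * f j := by
  induction s using Finset.induction_on_max with
  | empty => simp
  | insert a s ha ih =>
    -- `a` is a new maximum, so the new pairs `i < j` are exactly the `(i, a)` with `i ∈ s`.
    have has : a ∉ s := fun h => lt_irrefl a (ha a h)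
    have hpairs : ∑ i ∈ insert a s, ∑ j ∈ insert a s with i < j, f i * f j
        = ∑ i ∈ s, ∑ j ∈ s with i < j, f i * f j + (∑ i ∈ s, f i) * f a := by
      have h_top : ({j ∈ insert a s | a < j} : Finset ι) = ∅ :=
        filter_eq_empty_iff.2 fun j hj =>
          not_lt.2 <| (mem_insert.1 hj).elim le_of_eq fun h => (ha j h).le
      have h_below (i) (hi : i ∈ s) : ∑ j ∈ insert a s with i < j, f i * f j
          = ∑ j ∈ s with i < j, f i * f j + f i * f a := by
        rw [filter_insert, if_pos (ha i hi), sum_insert fun h => has (mem_filter.1 h).1, add_comm]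
      rw [sum_insert has, h_top, sum_empty, zero_add, sum_congr rfl h_below, sum_add_distrib,
        sum_mul]
    rw [hpairs, sum_insert has, sum_insert has, add_sq', ih]
    ring

end Finset

theorem stmt17_general {V : Type*} [NormedAddCommGroup V] [InnerProductSpace ℝ V]
    (N : ℕ) (𝒜 : V → V) (Dom : Set V) (a : ℝ)
    (q : Fin N → V →L[ℝ] ℝ) (c : Fin N → ℝ)
    (Ek : Fin N → V →L[ℝ] V) (Ekl : Fin N → Fin N → V →L[ℝ] V)
    (hEk : ∀ k, ∀ x ∈ Dom, ⟪Ek k x, 𝒜 x⟫ = -2 * a * (q k x) ^ 2)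
    (hEkl : ∀ k l, ∀ x ∈ Dom, ⟪Ekl k l x, 𝒜 x⟫ = -4 * a * (q k x) * (q l x))
    (E : V →L[ℝ] V)
    (hE : E = (∑ k, (c k) ^ 2 • Ek k)
        + ∑ k, ∑ l ∈ Finset.univ.filter (fun l => k < l), (c k * c l) • Ekl k l) :
    ∀ x ∈ Dom, ⟪E x, 𝒜 x⟫ = -2 * a * (∑ k, c k * q k x) ^ 2 := by
  intro x hx
  have hEx : ⟪E x, 𝒜 x⟫ = ∑ k, c k ^ 2 * (-2 * a * q k x ^ 2)
      + ∑ k, ∑ l ∈ Finset.univ with k < l, c k * c l * (-4 * a * q k x * q l x) := by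
    rw [hE]
    simp only [add_apply, FunLike.coe_sum, Finset.sum_apply, smul_apply, inner_add_left,
      sum_inner, real_inner_smul_left, hEk _ x hx, hEkl _ _ x hx]
  rw [hEx, Finset.sq_sum_eq_sum_sq_add_two_mul_sum_lt]
  simp only [mul_add, Finset.mul_sum]
  congr 1
  · exact Finset.sum_congr rfl fun k _ => by ring
  · exact Finset.sum_congr rfl fun k _ => Finset.sum_congr rfl fun l _ => by ring

/-- Abstract (finite-index) version of the lemma on properties of the operator `E`. -/
theorem stmt17 {V : Type*} [NormedAddCommGroup V] [InnerProductSpace ℝ V]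
    (N : ℕ) (𝒜 : V → V) (Dom : Set V) (a : ℝ) (ha : 0 < a)
    (q : Fin N → V →L[ℝ] ℝ) (c : Fin N → ℝ)
    (Ek : Fin N → V →L[ℝ] V) (Ekl : Fin N → Fin N → V →L[ℝ] V)
    (hEk_sa : ∀ k, ∀ x y : V, ⟪Ek k x, y⟫ = ⟪x, Ek k y⟫)
    (hEkl_sa : ∀ k l, ∀ x y : V, ⟪Ekl k l x, y⟫ = ⟪x, Ekl k l y⟫)
    (hEk : ∀ k, ∀ x ∈ Dom, ⟪Ek k x, 𝒜 x⟫ = -2 * a * (q k x) ^ 2)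
    (hEkl : ∀ k l, ∀ x ∈ Dom, ⟪Ekl k l x, 𝒜 x⟫ = -4 * a * (q k x) * (q l x))
    (E : V →L[ℝ] V)
    (hE : E = (∑ k, (c k) ^ 2 • Ek k)
        + ∑ k, ∑ l ∈ Finset.univ.filter (fun l => k < l), (c k * c l) • Ekl k l) :
    ∀ x ∈ Dom, ⟪E x, 𝒜 x⟫ = -2 * a * (∑ k, c k * q k x) ^ 2 :=
  stmt17_general N 𝒜 Dom a q c Ek Ekl hEk hEkl E hE
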